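/- arXiv:1607.07156 — 2 statements merged into one kernel-verified Lean document; each statement's English description precedes it below -/
import Mathlib

section
/- For any finite group G of exponent dividing d, a quasi-equation ρ := (⋀_{1≤i≤n} uᵢ ≈ vᵢ) → u₀ ≈ v₀ over the signature {·}, in which every variable of the conclusion appears in the premise, holds in G if and only if the equation ((∏_{1≤i≤n}(uᵢ ∧ vᵢ))^d) · (u₀ ∧ v₀)^d ≈ (∏_{1≤i≤n}(uᵢ ∧ vᵢ))^d holds in the flat extension ♭(G). -/
/-- Terms in the signature `{·}`. -/
inductive GTerm : Type
  | var : ℕ → GTerm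
  | mul : GTerm → GTerm → GTerm

/-- Evaluation of a `{·}`-term under an assignment of the variables. -/
def GTerm.eval {M : Type*} [Mul M] (θ : ℕ → M) : GTerm → M
  | .var n => θ n
  | .mul s t => s.eval θ * t.eval θ

/-- The variable `x` occurs in the given term. -/
def GTerm.occurs (x : ℕ) : GTerm → Prop
  | .var n => n = x
  | .mul s t => s.occurs x ∨ t.occurs x

open Classical in
/-- The flat meet: `x ∧ y = x` if `x = y` and `0` otherwise.  Applied to `WithZero G`
this gives the meet of the flat extension `♭(G)` of a group `G`. -/
noncomputable def fwedge {α : Type*} [Zero α] (x y : α) : α := if x = y then x else 0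

/-!
A nonzero value of a term in `♭(G)` forces all its variables to take values in `G`. So if the
product `P` of the premise meets is nonzero, the assignment is a `G`-valued one on the premise
variables, hence on those of the conclusion; the premises hold there, the quasi-equation gives
`u₀ = v₀`, and `(u₀ ∧ v₀)ᵈ = 1`. If `P = 0` both sides vanish. Conversely, for an assignment in `G` satisfying the premises, `Pᵈ` is a
nonzero element of `♭(G)`, so it cancels and leaves `(u₀ ∧ v₀)ᵈ = 1`, which rules out
`u₀ ∧ v₀ = 0`.
-/

section FlatMeet

variable {α : Type*} [Zero α]

theorem fwedge_self (x : α) : fwedge x x = x := if_pos rfl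

theorem fwedge_ne_zero_iff {x y : α} : fwedge x y ≠ 0 ↔ x = y ∧ x ≠ 0 := by
  unfold fwedge
  split_ifs with h <;> simp [h]

end FlatMeet

namespace GTerm

theorem eval_comp {M N F : Type*} [Mul M] [Mul N] [FunLike F M N] [MulHomClass F M N]
    (f : F) (θ : ℕ → M) (t : GTerm) : t.eval (f ∘ θ) = f (t.eval θ) := by
  induction t with
  | var n => rfl
  | mul s t ihs iht => simp only [eval, ihs, iht, map_mul]

theorem eval_congr {M : Type*} [Mul M] {θ σ : ℕ → M} {t : GTerm}
    (h : ∀ x, t.occurs x → θ x = σ x) : t.eval θ = t.eval σ := by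
  induction t with
  | var n => exact h n rfl
  | mul s t ihs iht =>
    simp only [eval, ihs fun x hx => h x (Or.inl hx), iht fun x hx => h x (Or.inr hx)]

theorem apply_ne_zero_of_eval_ne_zero {M : Type*} [MulZeroClass M] {θ : ℕ → M} {t : GTerm}
    (h : t.eval θ ≠ 0) {x : ℕ} (hx : t.occurs x) : θ x ≠ 0 := by
  induction t with
  | var n => exact hx ▸ h
  | mul s t ihs iht =>
    rcases hx with hx | hx
    · exact ihs (left_ne_zero_of_mul h) hx
    · exact iht (right_ne_zero_of_mul h) hx

end GTerm

section WithZero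

variable {M : Type*} [MulOneClass M]

theorem WithZero.exists_coe_eq_of_ne_zero (θ : ℕ → WithZero M) (S : Set ℕ)
    (hS : ∀ x ∈ S, θ x ≠ 0) : ∃ θ' : ℕ → M, ∀ x ∈ S, (θ' x : WithZero M) = θ x := by
  classical
  refine ⟨fun x => if h : θ x = 0 then 1 else WithZero.unzero h, fun x hx => ?_⟩
  simp [hS x hx]

theorem GTerm.eval_eq_coe_of_eqOn {θ : ℕ → WithZero M} {θ' : ℕ → M} {t : GTerm}
    (h : ∀ x, t.occurs x → (θ' x : WithZero M) = θ x) :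
    t.eval θ = ((t.eval θ' : M) : WithZero M) :=
  (GTerm.eval_congr fun x hx => (h x hx).symm).trans
    (GTerm.eval_comp WithZero.coeMonoidHom θ' t)

end WithZero

section FlatExtension

variable {G : Type*} [Group G] {d : ℕ} {ps : List (GTerm × GTerm)} {u₀ v₀ : GTerm}

theorem flat_equation_of_quasiEquation (hd : 0 < d) (hexp : ∀ g : G, g ^ d = 1)
    (hvars : ∀ x : ℕ, (u₀.occurs x ∨ v₀.occurs x) → ∃ p ∈ ps, p.1.occurs x ∨ p.2.occurs x)
    (hq : ∀ θ : ℕ → G, (∀ p ∈ ps, p.1.eval θ = p.2.eval θ) → u₀.eval θ = v₀.eval θ)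
    (θ : ℕ → WithZero G) :
    ((ps.map fun p => fwedge (p.1.eval θ) (p.2.eval θ)).prod) ^ d *
        (fwedge (u₀.eval θ) (v₀.eval θ)) ^ d =
      ((ps.map fun p => fwedge (p.1.eval θ) (p.2.eval θ)).prod) ^ d := by
  by_cases hP : (ps.map fun p => fwedge (p.1.eval θ) (p.2.eval θ)).prod = 0
  · rw [hP, zero_pow hd.ne', zero_mul]
  have hprem : ∀ p ∈ ps, p.1.eval θ = p.2.eval θ ∧ p.1.eval θ ≠ 0 := fun p hp =>
    fwedge_ne_zero_iff.1 fun h0 => hP (List.prod_eq_zero (List.mem_map.2 ⟨p, hp, h0⟩))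
  set S := {x | ∃ p ∈ ps, p.1.occurs x ∨ p.2.occurs x}
  have hS : ∀ x ∈ S, θ x ≠ 0 := by
    rintro x ⟨p, hp, hx | hx⟩
    · exact GTerm.apply_ne_zero_of_eval_ne_zero (hprem p hp).2 hx
    · exact GTerm.apply_ne_zero_of_eval_ne_zero ((hprem p hp).1 ▸ (hprem p hp).2) hx
  obtain ⟨θ', hθ'⟩ := WithZero.exists_coe_eq_of_ne_zero θ S hS
  have hlift : ∀ t : GTerm, (∀ x, t.occurs x → x ∈ S) → t.eval θ = ↑(t.eval θ') :=
    fun t ht => GTerm.eval_eq_coe_of_eqOn fun x hx => hθ' x (ht x hx)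
  have hu := hlift u₀ fun x hx => hvars x (Or.inl hx)
  have hv := hlift v₀ fun x hx => hvars x (Or.inr hx)
  have hconc : u₀.eval θ' = v₀.eval θ' := hq θ' fun p hp => WithZero.coe_inj.1 <| by
    rw [← hlift p.1 fun x hx => ⟨p, hp, .inl hx⟩, ← hlift p.2 fun x hx => ⟨p, hp, .inr hx⟩]
    exact (hprem p hp).1
  rw [hu, hv, hconc, fwedge_self, ← WithZero.coe_pow, hexp, WithZero.coe_one, mul_one]

theorem quasiEquation_of_flat_equation (hd : 0 < d)
    (he : ∀ θ : ℕ → WithZero G,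
      ((ps.map fun p => fwedge (p.1.eval θ) (p.2.eval θ)).prod) ^ d *
          (fwedge (u₀.eval θ) (v₀.eval θ)) ^ d =
        ((ps.map fun p => fwedge (p.1.eval θ) (p.2.eval θ)).prod) ^ d)
    (θ : ℕ → G) (hprem : ∀ p ∈ ps, p.1.eval θ = p.2.eval θ) : u₀.eval θ = v₀.eval θ := by
  have hcoe : ∀ t : GTerm, t.eval (WithZero.coeMonoidHom ∘ θ) = ↑(t.eval θ) :=
    GTerm.eval_comp WithZero.coeMonoidHom θ
  have hP : (ps.map fun p => fwedge (p.1.eval (WithZero.coeMonoidHom ∘ θ))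
      (p.2.eval (WithZero.coeMonoidHom ∘ θ))).prod ≠ 0 := by
    refine List.prod_ne_zero fun h0 => ?_
    obtain ⟨p, hp, hp0⟩ := List.mem_map.1 h0
    refine fwedge_ne_zero_iff.2 ⟨?_, ?_⟩ hp0 <;> simp [hcoe, hprem p hp]
  have hw : fwedge (u₀.eval (WithZero.coeMonoidHom ∘ θ))
      (v₀.eval (WithZero.coeMonoidHom ∘ θ)) ^ d = 1 :=
    mul_left_cancel₀ (pow_ne_zero d hP) ((he _).trans (mul_one _).symm)
  have huv := (fwedge_ne_zero_iff.1 fun h0 => by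
    rw [h0, zero_pow hd.ne'] at hw
    exact zero_ne_one hw).1
  exact WithZero.coe_inj.1 ((hcoe u₀).symm.trans (huv.trans (hcoe v₀)))

end FlatExtension

theorem stmt5_general {G : Type*} [Group G] (d : ℕ) (hd : 0 < d)
    (hexp : ∀ g : G, g ^ d = 1)
    (ps : List (GTerm × GTerm)) (u₀ v₀ : GTerm)
    (hvars : ∀ x : ℕ, (u₀.occurs x ∨ v₀.occurs x) →
      ∃ p ∈ ps, p.1.occurs x ∨ p.2.occurs x) :
    (∀ θ : ℕ → G, (∀ p ∈ ps, p.1.eval θ = p.2.eval θ) → u₀.eval θ = v₀.eval θ) ↔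
    (∀ θ : ℕ → WithZero G,
      ((ps.map fun p => fwedge (p.1.eval θ) (p.2.eval θ)).prod) ^ d *
          (fwedge (u₀.eval θ) (v₀.eval θ)) ^ d =
        ((ps.map fun p => fwedge (p.1.eval θ) (p.2.eval θ)).prod) ^ d) :=
  ⟨flat_equation_of_quasiEquation hd hexp hvars, quasiEquation_of_flat_equation hd⟩

/-- For a finite group `G` of exponent dividing `d`, the quasi-equation
`(⋀ᵢ uᵢ ≈ vᵢ) → u₀ ≈ v₀` (all conclusion variables occurring in the premise) holds in `G`
iff the equation `(∏ᵢ (uᵢ ∧ vᵢ))ᵈ · (u₀ ∧ v₀)ᵈ ≈ (∏ᵢ (uᵢ ∧ vᵢ))ᵈ` holds in `♭(G)`. -/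
theorem stmt5 {G : Type*} [Group G] [Finite G] (d : ℕ) (hd : 0 < d)
    (hexp : ∀ g : G, g ^ d = 1)
    (ps : List (GTerm × GTerm)) (u₀ v₀ : GTerm)
    (hvars : ∀ x : ℕ, (u₀.occurs x ∨ v₀.occurs x) →
      ∃ p ∈ ps, p.1.occurs x ∨ p.2.occurs x) :
    (∀ θ : ℕ → G, (∀ p ∈ ps, p.1.eval θ = p.2.eval θ) → u₀.eval θ = v₀.eval θ) ↔
    (∀ θ : ℕ → WithZero G,
      ((ps.map fun p => fwedge (p.1.eval θ) (p.2.eval θ)).prod) ^ d *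
          (fwedge (u₀.eval θ) (v₀.eval θ)) ^ d =
        ((ps.map fun p => fwedge (p.1.eval θ) (p.2.eval θ)).prod) ^ d) :=
  stmt5_general d hd hexp ps u₀ v₀ hvars
end

section
/- Every finite simple group in the variety generated by a finite group G has order at most |G|. -/
/-!
An abelian simple `H` is cyclic of prime order, and the law `x ^ |G|` of `G` makes that prime
divide `|G|`.

For nonabelian `H`, let `Ψ` map the free group `F` on the set `H` onto `H`. The laws of `G` in
these variables are the intersection of the kernels of the finitely many `f : F →* G`, and they
lie in `ker Ψ` because `H` satisfies them. Since `H` is simple and nonabelian, `ker Ψ` is prime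
among normal subgroups: if `N ⊓ B ≤ ker Ψ` and neither `N` nor `B` lies in `ker Ψ`, both map onto
`H`, so `⁅H, H⁆` is the image of `⁅N, B⁆ ≤ N ⊓ B`, which is trivial. Hence `ker f ≤ ker Ψ` for a
single `f`, and `H` is a quotient of the subgroup `f(F)` of `G`.
-/

def IsLaw (G : Type*) [Group G] {α : Type*} (w : FreeGroup α) : Prop :=
  ∀ θ : α → G, FreeGroup.lift θ w = 1

theorem FreeGroup.lift_map_apply {α β G : Type*} [Group G] (θ : β → G) (ι : α → β)
    (w : FreeGroup α) : lift θ (map ι w) = lift (θ ∘ ι) w :=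
  DFunLike.congr_fun (show (lift θ).comp (map ι) = lift (θ ∘ ι) by ext; simp) w

theorem isLaw_map_iff {G α β : Type*} [Group G] {ι : α → β} (hι : ι.Injective)
    {w : FreeGroup α} : IsLaw G (FreeGroup.map ι w) ↔ IsLaw G w := by
  refine ⟨fun hw θ => ?_, fun hw θ => ?_⟩
  · simpa [FreeGroup.lift_map_apply, Function.extend_comp hι] using hw (Function.extend ι θ 1)
  · simpa [FreeGroup.lift_map_apply] using hw (θ ∘ ι)

theorem isLaw_pow_card {G α : Type*} [Group G] [Finite G] (a : α) :
    IsLaw G (FreeGroup.of a ^ Nat.card G) := fun _ => by simp [pow_card_eq_one']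

section Prime

variable {F H : Type*} [Group F] [Group H] [IsSimpleGroup H] {Ψ : F →* H}

theorem le_ker_or_le_ker_of_inf_le_ker (hH : commutator H ≠ ⊥) (hΨ : Function.Surjective Ψ)
    {N B : Subgroup F} [N.Normal] [B.Normal] (h : N ⊓ B ≤ Ψ.ker) :
    N ≤ Ψ.ker ∨ B ≤ Ψ.ker := by
  simp only [← Subgroup.map_eq_bot_iff]
  by_contra! hNB
  have hN := (IsSimpleGroup.eq_bot_or_eq_top_of_normal _ (.map ‹_› Ψ hΨ)).resolve_left hNB.1
  have hB := (IsSimpleGroup.eq_bot_or_eq_top_of_normal _ (.map ‹_› Ψ hΨ)).resolve_left hNB.2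
  have : ⁅N.map Ψ, B.map Ψ⁆ = ⊥ := by
    rw [← Subgroup.map_commutator, Subgroup.map_eq_bot_iff]
    exact (Subgroup.commutator_le_inf N B).trans h
  rw [hN, hB] at this
  exact hH this

theorem exists_le_ker_of_finsetInf_le_ker (hH : commutator H ≠ ⊥) (hΨ : Function.Surjective Ψ)
    {ι : Type*} (N : ι → Subgroup F) [∀ i, (N i).Normal] (S : Finset ι)
    (h : S.inf N ≤ Ψ.ker) : ∃ i ∈ S, N i ≤ Ψ.ker := by
  classical
  induction S using Finset.induction_on with
  | empty =>
    obtain ⟨x, hx⟩ := exists_ne (1 : H)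
    obtain ⟨w, rfl⟩ := hΨ x
    exact absurd (h (Subgroup.mem_top w)) hx
  | insert i S _ ih =>
    have : (S.inf N).Normal := Finset.inf_induction inferInstance
      (fun _ _ _ _ => Subgroup.normal_inf_normal _ _) fun _ _ => inferInstance
    rw [Finset.inf_insert] at h
    rcases le_ker_or_le_ker_of_inf_le_ker hH hΨ h with hi | hS
    · exact ⟨i, Finset.mem_insert_self i S, hi⟩
    · obtain ⟨j, hj, hjΨ⟩ := ih hS
      exact ⟨j, Finset.mem_insert_of_mem hj, hjΨ⟩

theorem exists_le_ker_of_iInf_le_ker (hH : commutator H ≠ ⊥) (hΨ : Function.Surjective Ψ)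
    {ι : Type*} [Finite ι] (N : ι → Subgroup F) [∀ i, (N i).Normal]
    (h : ⨅ i, N i ≤ Ψ.ker) : ∃ i, N i ≤ Ψ.ker := by
  have := Fintype.ofFinite ι
  rw [← Finset.inf_univ_eq_iInf] at h
  obtain ⟨i, -, hi⟩ := exists_le_ker_of_finsetInf_le_ker hH hΨ N Finset.univ h
  exact ⟨i, hi⟩

end Prime

theorem card_le_card_of_ker_le_ker {F G H : Type*} [Group F] [Group G] [Finite G] [Group H]
    {f : F →* G} {Ψ : F →* H} (hΨ : Function.Surjective Ψ) (h : f.ker ≤ Ψ.ker) :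
    Nat.card H ≤ Nat.card G :=
  calc Nat.card H = Ψ.ker.index := by
        rw [Subgroup.index_ker, MonoidHom.range_eq_top.2 hΨ, Subgroup.card_top]
    _ ≤ f.ker.index := Subgroup.index_antitone h
    _ = Nat.card f.range := Subgroup.index_ker f
    _ ≤ Nat.card G := Subgroup.card_le_card_group _

open scoped IsMulCommutative in
theorem card_le_card_of_isMulCommutative {G H : Type*} [Group G] [Finite G] [Group H]
    [IsMulCommutative H] [IsSimpleGroup H] (hlaw : ∀ w : FreeGroup H, IsLaw G w → IsLaw H w) :
    Nat.card H ≤ Nat.card G := by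
  have hexp : ∀ h : H, h ^ Nat.card G = 1 := fun h => by
    simpa using hlaw _ (isLaw_pow_card 1) fun _ => h
  calc Nat.card H = Monoid.exponent H := IsCyclic.exponent_eq_card.symm
    _ ≤ Nat.card G := Nat.le_of_dvd Nat.card_pos (Monoid.exponent_dvd_of_forall_pow_eq_one hexp)

theorem card_le_card_of_commutator_ne_bot {G H : Type*} [Group G] [Finite G] [Group H] [Finite H]
    [IsSimpleGroup H] (hH : commutator H ≠ ⊥) (hlaw : ∀ w : FreeGroup H, IsLaw G w → IsLaw H w) :
    Nat.card H ≤ Nat.card G := by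
  have hΨ : Function.Surjective (FreeGroup.lift (id : H → H)) := fun h => ⟨.of h, by simp⟩
  have hker : ⨅ j : H → G, (FreeGroup.lift j).ker ≤ (FreeGroup.lift id).ker := fun w hw =>
    hlaw w (fun j => Subgroup.mem_iInf.1 hw j) id
  obtain ⟨j, hj⟩ := exists_le_ker_of_iInf_le_ker hH hΨ _ hker
  exact card_le_card_of_ker_le_ker hΨ hj

/-- Every finite simple group in the variety generated by a finite group `G`
(i.e. satisfying every group identity holding in `G`) has order at most `|G|`. -/
theorem stmt8 {G H : Type*} [Group G] [Finite G] [Group H] [Finite H] [IsSimpleGroup H]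
    (hid : ∀ w : FreeGroup ℕ, (∀ θ : ℕ → G, FreeGroup.lift θ w = 1) →
      ∀ θ : ℕ → H, FreeGroup.lift θ w = 1) :
    Nat.card H ≤ Nat.card G := by
  obtain ⟨ι, hι⟩ := Countable.exists_injective_nat H
  have hlaw (w : FreeGroup H) (hw : IsLaw G w) : IsLaw H w :=
    (isLaw_map_iff hι).1 (hid _ ((isLaw_map_iff hι).2 hw))
  by_cases hH : commutator H = ⊥
  · have := (commutator_eq_bot_iff H).1 hH
    exact card_le_card_of_isMulCommutative hlaw
  · exact card_le_card_of_commutator_ne_bot hH hlaw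
end
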